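/- Let D be a digraph with list dichromatic number at most 3. Then D is majority 3-choosable. -/

import Mathlib

open scoped Classical

variable {V : Type*} [Fintype V]

/-- The out-neighborhood of `v` in the digraph on `V` with edge relation `E`. -/
noncomputable def outNbrs (E : V → V → Prop) (v : V) : Finset V :=
  Finset.univ.filter (fun w => E v w)

/-- The in-neighborhood of `v` in the digraph on `V` with edge relation `E`. -/
noncomputable def inNbrs (E : V → V → Prop) (v : V) : Finset V :=
  Finset.univ.filter (fun w => E w v)

/-- `c` is a majority coloring of the digraph `(V, E)`: every vertex `v` has at
most `d⁺(v)/2` out-neighbors `w` with `c w = c v`. -/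
def IsMajorityColoring {α : Type*} (E : V → V → Prop) (c : V → α) : Prop :=
  ∀ v : V, 2 * ((outNbrs E v).filter (fun w => c w = c v)).card ≤ (outNbrs E v).card

/-- `l` is the vertex list of a directed cycle: a nonempty list of pairwise
distinct vertices in which each vertex has an edge to the next one, and the
last vertex has an edge back to the first one. -/
def IsDiCycle (E : V → V → Prop) (l : List V) : Prop :=
  l ≠ [] ∧ l.Nodup ∧ l.Chain' E ∧
    ∃ a b, l.head? = some a ∧ l.getLast? = some b ∧ E b a

/-- All vertices of the list `l` get the same color under `c`. -/
def MonochromaticList {α : Type*} (c : V → α) (l : List V) : Prop :=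
  ∀ u ∈ l, ∀ w ∈ l, c u = c w

/-- The digraph `(V, E)` is majority `k`-choosable: for every assignment of
lists of size at least `k` to the vertices there is a majority coloring
choosing each vertex's color from its list. -/
def MajorityChoosable (E : V → V → Prop) (k : ℕ) : Prop :=
  ∀ L : V → Finset ℕ, (∀ v, k ≤ (L v).card) →
    ∃ c : V → ℕ, (∀ v, c v ∈ L v) ∧ IsMajorityColoring E c

/-!
Pick three colours from each list and offer the vertex the three pairs of them. The hypothesis
chooses a pair `S v` for every vertex so that the vertices carrying any fixed pair induce an
acyclic digraph. Colour greedily along these acyclic orders, giving `v` the cheaper colour of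
`S v`, where an out-neighbour `w` costs `x` if it has the same pair and already has colour `x`,
or if it has a different pair containing `x`. Two different pairs share at most one colour, so
the two costs add up to at most `d⁺(v)`, and the cheaper one is at most `d⁺(v) / 2`.
-/

open Finset

theorem List.exists_eq_append_cons_append_cons_of_not_nodup {α : Type*} :
    ∀ {l : List α}, ¬ l.Nodup → ∃ x p m s, l = p ++ x :: (m ++ x :: s)
  | [], h => absurd List.nodup_nil h
  | a :: l, h => by
    rw [List.nodup_cons, not_and_or, not_not] at h
    rcases h with ha | hl
    · obtain ⟨m, s, rfl⟩ := List.append_of_mem ha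
      exact ⟨a, [], m, s, rfl⟩
    · obtain ⟨x, p, m, s, rfl⟩ := exists_eq_append_cons_append_cons_of_not_nodup hl
      exact ⟨x, a :: p, m, s, rfl⟩

/-- `l ++ [a]` encodes a closed walk through the vertices of `l`; shortcutting it at a repeated
vertex leaves a shorter one. -/
theorem exists_isDiCycle_of_isChain_append_head {V : Type*} (E : V → V → Prop) :
    ∀ (l : List V) (a : V), l.head? = some a → (l ++ [a]).IsChain E → ∃ c, IsDiCycle E c
  | l, a, hhead, hchain => by
    by_cases hnd : l.Nodup
    · have hne : l ≠ [] := by rintro rfl; simp at hhead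
      refine ⟨l, hne, hnd, hchain.left_of_append, a, l.getLast hne, hhead,
        List.getLast?_eq_some_getLast hne, ?_⟩
      simpa using hchain.rel_getLast_head_of_append hne (List.cons_ne_nil a [])
    · obtain ⟨x, p, m, s, rfl⟩ := List.exists_eq_append_cons_append_cons_of_not_nodup hnd
      have hshort : (x :: m).length < (p ++ x :: (m ++ x :: s)).length := by simp; omega
      exact exists_isDiCycle_of_isChain_append_head E (x :: m) x rfl
        (hchain.infix ⟨p, s ++ [a], by simp⟩)
termination_by l => l.length

theorem exists_isDiCycle_of_transGen {V : Type*} {E : V → V → Prop} {v : V}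
    (h : Relation.TransGen E v v) : ∃ c, IsDiCycle E c := by
  obtain ⟨u, hvu, huv⟩ := Relation.TransGen.tail'_iff.mp h
  obtain ⟨l, hchain, hlast⟩ := List.exists_isChain_cons_of_relationReflTransGen hvu
  refine exists_isDiCycle_of_isChain_append_head E (v :: l) v rfl
    (hchain.append (List.isChain_singleton v) ?_)
  simp [List.getLast?_eq_some_getLast, hlast, huv]

theorem IsDiCycle.mono {V : Type*} {R E : V → V → Prop} (hRE : ∀ u w, R u w → E u w)
    {l : List V} (hl : IsDiCycle R l) : IsDiCycle E l := by
  obtain ⟨hne, hnd, hchain, a, b, ha, hb, hba⟩ := hl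
  exact ⟨hne, hnd, hchain.imp (hRE · ·), a, b, ha, hb, hRE b a hba⟩

theorem monochromaticList_of_isChain {V β : Type*} {c : V → β} :
    ∀ {l : List V}, l.IsChain (fun u w => c u = c w) → MonochromaticList c l
  | [], _ => by simp [MonochromaticList]
  | a :: l, h => by
    have hall := h.induction (fun u => c u = c a) _ (fun _ _ huw hu => huw ▸ hu) fun _ => rfl
    exact fun u hu w hw => (hall u hu).trans (hall w hw).symm

theorem wellFounded_flip_of_forall_not_isDiCycle {V : Type*} [Finite V] {E : V → V → Prop}
    (h : ∀ c, ¬ IsDiCycle E c) : WellFounded (flip E) := by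
  have : IsTrans V (Relation.TransGen (flip E)) := ⟨fun _ _ _ => Relation.TransGen.trans⟩
  have : Std.Irrefl (Relation.TransGen (flip E)) :=
    ⟨fun _ hv => (exists_isDiCycle_of_transGen (Relation.transGen_swap.mp hv)).elim h⟩
  exact Subrelation.wf Relation.TransGen.single
    (Finite.wellFounded_of_trans_of_irrefl (Relation.TransGen (flip E)))

theorem WellFounded.exists_forall_mem {α β : Type*} [Nonempty β] {r : α → α → Prop}
    (hr : WellFounded r) (A : α → (α → β) → Set β) (hne : ∀ a f, (A a f).Nonempty)
    (hloc : ∀ a f g, (∀ b, r b a → f b = g b) → A a f = A a g) :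
    ∃ f : α → β, ∀ a, f a ∈ A a f := by
  let extend (a : α) (f : ∀ b, r b a → β) (b : α) : β :=
    if h : r b a then f b h else Classical.arbitrary β
  let f := hr.fix fun a rec => Classical.epsilon (· ∈ A a (extend a rec))
  refine ⟨f, fun a => ?_⟩
  have hA : A a (extend a fun b _ => f b) = A a f :=
    hloc a _ _ fun b hb => by simp only [extend, dif_pos hb]
  rw [show f a = _ from hr.fix_eq _ a, ← hA]
  exact Classical.epsilon_spec (hne a _)

theorem Finset.card_filter_add_card_filter_le {ι : Type*} (s : Finset ι) {p q r : ι → Prop}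
    [DecidablePred p] [DecidablePred q] [DecidablePred r]
    (hpq : ∀ a ∈ s, p a → ¬ q a) (hpr : ∀ a ∈ s, p a → r a) (hqr : ∀ a ∈ s, q a → r a) :
    #{a ∈ s | p a} + #{a ∈ s | q a} ≤ #{a ∈ s | r a} := by
  rw [← card_union_of_disjoint (disjoint_filter.mpr hpq)]
  refine card_le_card fun a ha => ?_
  simp only [mem_union, mem_filter] at ha ⊢
  rcases ha with ⟨has, ha⟩ | ⟨has, ha⟩
  exacts [⟨has, hpr a has ha⟩, ⟨has, hqr a has ha⟩]

theorem Finset.eq_of_mem_of_mem_of_card_le_two {α : Type*} {s t : Finset α} {x y : α}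
    (hxy : x ≠ y) (hs : #s ≤ 2) (ht : #t ≤ 2) (hxs : x ∈ s) (hys : y ∈ s) (hxt : x ∈ t)
    (hyt : y ∈ t) : s = t := by
  have hpair : ∀ u : Finset α, #u ≤ 2 → x ∈ u → y ∈ u → {x, y} = u := fun u hu hxu hyu =>
    eq_of_subset_of_card_le (insert_subset hxu (singleton_subset_iff.mpr hyu))
      (by rwa [card_pair hxy])
  rw [← hpair s hs hxs hys, hpair t ht hxt hyt]

section PairCost

variable {α : Type*} (E : V → V → Prop) (S : V → Finset α)

noncomputable def pairCost (c : V → α) (v : V) (x : α) : ℕ :=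
  #{w ∈ outNbrs E v | S w = S v ∧ c w = x} + #{w ∈ outNbrs E v | S w ≠ S v ∧ x ∈ S w}

theorem card_filter_eq_le_pairCost {c : V → α} (hc : ∀ w, c w ∈ S w) (v : V) (x : α) :
    #{w ∈ outNbrs E v | c w = x} ≤ pairCost E S c v x := by
  refine (card_le_card fun w hw => ?_).trans (card_union_le _ _)
  rw [mem_filter] at hw
  by_cases hSw : S w = S v
  · exact mem_union_left _ (mem_filter.mpr ⟨hw.1, hSw, hw.2⟩)
  · exact mem_union_right _ (mem_filter.mpr ⟨hw.1, hSw, hw.2 ▸ hc w⟩)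

theorem pairCost_add_pairCost_le (hS : ∀ w, #(S w) ≤ 2) (c : V → α) {v : V} {x y : α}
    (hxy : x ≠ y) (hx : x ∈ S v) (hy : y ∈ S v) :
    pairCost E S c v x + pairCost E S c v y ≤ #(outNbrs E v) := by
  have hsame := (outNbrs E v).card_filter_add_card_filter_le
    (p := fun w => S w = S v ∧ c w = x) (q := fun w => S w = S v ∧ c w = y)
    (r := fun w => S w = S v) (fun w _ hwx hwy => hxy (hwx.2.symm.trans hwy.2))
    (fun _ _ => And.left) (fun _ _ => And.left)
  have hother := (outNbrs E v).card_filter_add_card_filter_le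
    (p := fun w => S w ≠ S v ∧ x ∈ S w) (q := fun w => S w ≠ S v ∧ y ∈ S w)
    (r := fun w => ¬ S w = S v)
    (fun w _ hwx hwy => hwx.1 (eq_of_mem_of_mem_of_card_le_two hxy (hS w) (hS v) hwx.2 hwy.2 hx hy))
    (fun _ _ => And.left) (fun _ _ => And.left)
  have htotal := (outNbrs E v).card_filter_add_card_filter_not (fun w => S w = S v)
  unfold pairCost
  omega

theorem pairCost_congr {c c' : V → α} {v : V}
    (h : ∀ w, E v w ∧ S v = S w → c w = c' w) (x : α) :
    pairCost E S c v x = pairCost E S c' v x := by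
  unfold pairCost
  congr 2
  refine filter_congr fun w hw => ?_
  rw [outNbrs, mem_filter] at hw
  exact and_congr_right fun hSw => by rw [h w ⟨hw.2, hSw.symm⟩]

end PairCost

theorem exists_isMajorityColoring_of_forall_not_monochromatic {α : Type*}
    (E : V → V → Prop) (S : V → Finset α) (hS : ∀ v, #(S v) = 2)
    (hacyc : ∀ l, IsDiCycle E l → ¬ MonochromaticList S l) :
    ∃ c : V → α, (∀ v, c v ∈ S v) ∧ IsMajorityColoring E c := by
  rcases isEmpty_or_nonempty V with _ | _
  · exact ⟨isEmptyElim, isEmptyElim, isEmptyElim⟩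
  obtain ⟨x₀, -⟩ := card_pos.mp ((hS (Classical.arbitrary V)).symm ▸ two_pos)
  have : Nonempty α := ⟨x₀⟩
  have hwf : WellFounded (flip fun u w => E u w ∧ S u = S w) :=
    wellFounded_flip_of_forall_not_isDiCycle fun l hl =>
      hacyc l (hl.mono fun _ _ => And.left)
        (monochromaticList_of_isChain (hl.2.2.1.imp fun _ _ => And.right))
  obtain ⟨c, hc⟩ := hwf.exists_forall_mem
    (fun v c => {x | x ∈ S v ∧ ∀ y ∈ S v, pairCost E S c v x ≤ pairCost E S c v y})
    (fun v c => (S v).exists_min_image _ (card_pos.mp ((hS v).symm ▸ two_pos)))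
    (fun v c c' h => by simp only [pairCost_congr E S h])
  refine ⟨c, fun v => (hc v).1, fun v => ?_⟩
  obtain ⟨x, y, hxy, hSv⟩ := card_eq_two.mp (hS v)
  have hx : x ∈ S v := hSv ▸ mem_insert_self x {y}
  have hy : y ∈ S v := hSv ▸ mem_insert_of_mem (mem_singleton_self y)
  have hcx := (hc v).2 x hx
  have hcy := (hc v).2 y hy
  calc 2 * #{w ∈ outNbrs E v | c w = c v}
      ≤ 2 * pairCost E S c v (c v) := by
        gcongr; exact card_filter_eq_le_pairCost E S (fun w => (hc w).1) v (c v)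
    _ ≤ pairCost E S c v x + pairCost E S c v y := by omega
    _ ≤ #(outNbrs E v) :=
        pairCost_add_pairCost_le E S (fun w => (hS w).le) c hxy hx hy

/-- The list dichromatic number is at most `k`. -/
def Dichoosable (E : V → V → Prop) (k : ℕ) : Prop :=
  ∀ L : V → Finset ℕ, (∀ v, k ≤ #(L v)) →
    ∃ c : V → ℕ, (∀ v, c v ∈ L v) ∧ ∀ l, IsDiCycle E l → ¬ MonochromaticList c l

/-- The `2`-subsets of a `k`-subset of each list, encoded as natural numbers, form the new lists. -/
theorem Dichoosable.exists_pairs {V : Type*} {E : V → V → Prop} {k : ℕ}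
    (h : Dichoosable E (k.choose 2)) (L : V → Finset ℕ) (hL : ∀ v, k ≤ #(L v)) :
    ∃ S : V → Finset ℕ, (∀ v, S v ⊆ L v ∧ #(S v) = 2) ∧
      ∀ l, IsDiCycle E l → ¬ MonochromaticList S l := by
  choose T hTL hT using fun v => exists_subset_card_eq (hL v)
  obtain ⟨q, hq, hqacyc⟩ := h (fun v => ((T v).powersetCard 2).image Encodable.encode) fun v => by
    rw [card_image_of_injective _ Encodable.encode_injective, card_powersetCard, hT v]
  choose S hS hSq using fun v => mem_image.mp (hq v)
  refine ⟨S, fun v => ?_, fun l hl hmono => hqacyc l hl fun u hu w hw => ?_⟩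
  · obtain ⟨hST, hcard⟩ := mem_powersetCard.mp (hS v)
    exact ⟨hST.trans (hTL v), hcard⟩
  · rw [← hSq u, ← hSq w, hmono u hu w hw]

theorem majority_three_choosable_of_list_dichromatic_le_three_general
    {V : Type*} [Fintype V] (E : V → V → Prop)
    (hlistdichrom : ∀ L : V → Finset ℕ, (∀ v, 3 ≤ (L v).card) →
      ∃ c : V → ℕ, (∀ v, c v ∈ L v) ∧
        ∀ l : List V, IsDiCycle E l → ¬ MonochromaticList c l) :
    MajorityChoosable E 3 := by
  intro L hL
  obtain ⟨S, hSL, hacyc⟩ := Dichoosable.exists_pairs (k := 3) hlistdichrom L hL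
  obtain ⟨c, hcS, hc⟩ :=
    exists_isMajorityColoring_of_forall_not_monochromatic E S (fun v => (hSL v).2) hacyc
  exact ⟨c, fun v => (hSL v).1 (hcS v), hc⟩

/-- Every digraph with list dichromatic number at most `3`
(for every assignment of lists of size at least `3` there is a choice of colors
from the lists leaving no directed cycle monochromatic) is majority
`3`-choosable. -/
theorem majority_three_choosable_of_list_dichromatic_le_three
    {V : Type*} [Fintype V] (E : V → V → Prop) (hloopless : ∀ v : V, ¬ E v v)
    (hlistdichrom : ∀ L : V → Finset ℕ, (∀ v, 3 ≤ (L v).card) →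
      ∃ c : V → ℕ, (∀ v, c v ∈ L v) ∧
        ∀ l : List V, IsDiCycle E l → ¬ MonochromaticList c l) :
    MajorityChoosable E 3 :=
  majority_three_choosable_of_list_dichromatic_le_three_general E hlistdichrom
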